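/- Discrete version: let w₁,…,w_N ∈ [0,1] with Σᵢ wᵢ > 0, and for x ∈ [0,1]^N define SD(x) = 1 − 2Σᵢ xᵢwᵢ/(Σᵢ xᵢ + Σᵢ wᵢ). Let D* = max over binary vectors y ∈ {0,1}^N of 2Σᵢ yᵢwᵢ/(Σᵢ yᵢ + Σᵢ wᵢ). Then a vector x ∈ [0,1]^N minimizes SD over [0,1]^N if and only if for every index i: xᵢ = 0 whenever wᵢ < D*/2 and xᵢ = 1 whenever wᵢ > D*/2; moreover min SD = 1 − D*. -/

import Mathlib

/-!
Writing `t` for the best binary Dice score, `Dd w x ≤ t` is equivalent to the linear inequality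
`∑ xᵢ (2wᵢ - t) ≤ t ∑ wᵢ`. Over the box `[0,1]^N` the left side is maximised coordinatewise by
`∑ (2wᵢ - t)⁺`, which is itself the value at the binary vector thresholding `w` at `t/2`; comparing
with a binary maximiser shows that this maximum equals `t ∑ wᵢ` exactly. Hence `t` also bounds the
soft Dice score, and the soft maximisers are the `x` attaining `(2wᵢ - t)⁺` in every coordinate.
-/

open Filter

noncomputable section

/-- Discrete soft-Dice loss `SD(x) = 1 - 2⟨x,w⟩/(‖x‖₁ + ‖w‖₁)`. -/
def SDd {N : ℕ} (w x : Fin N → ℝ) : ℝ :=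
  1 - 2 * (∑ i, x i * w i) / ((∑ i, x i) + (∑ i, w i))

/-- Discrete Dice score `D(y) = 2⟨y,w⟩/(‖y‖₁ + ‖w‖₁)`. -/
def Dd {N : ℕ} (w y : Fin N → ℝ) : ℝ :=
  2 * (∑ i, y i * w i) / ((∑ i, y i) + (∑ i, w i))

/-- The set of soft-Dice values over `[0,1]^N`. -/
def SDdvals {N : ℕ} (w : Fin N → ℝ) : Set ℝ :=
  {v : ℝ | ∃ x : Fin N → ℝ, (∀ i, x i ∈ Set.Icc (0:ℝ) 1) ∧ v = SDd w x}

/-- The set of Dice values over `{0,1}^N`. -/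
def Ddvals {N : ℕ} (w : Fin N → ℝ) : Set ℝ :=
  {v : ℝ | ∃ y : Fin N → ℝ, (∀ i, y i = 0 ∨ y i = 1) ∧ v = Dd w y}

open Finset

lemma mul_le_max_zero {a : ℝ} (ha : a ∈ Set.Icc (0 : ℝ) 1) (b : ℝ) : a * b ≤ max b 0 := by
  rcases le_total b 0 with hb | hb
  · exact (mul_nonpos_of_nonneg_of_nonpos ha.1 hb).trans (le_max_right b 0)
  · exact (mul_le_of_le_one_left hb ha.2).trans (le_max_left b 0)

lemma mul_eq_max_zero_iff (a b : ℝ) :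
    a * b = max b 0 ↔ (b < 0 → a = 0) ∧ (0 < b → a = 1) := by
  rcases lt_trichotomy b 0 with hb | rfl | hb
  · simp [max_eq_right hb.le, hb.ne, hb, not_lt_of_gt hb]
  · simp
  · simp [max_eq_left hb.le, hb.ne', hb, not_lt_of_gt hb]

section Dice

variable {N : ℕ} (w : Fin N → ℝ)

lemma SDd_eq_one_sub_Dd (x : Fin N → ℝ) : SDd w x = 1 - Dd w x := rfl

lemma sum_mul_two_mul_sub (x : Fin N → ℝ) (c : ℝ) :
    ∑ i, x i * (2 * w i - c) = 2 * ∑ i, x i * w i - c * ∑ i, x i := by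
  rw [mul_sum, mul_sum, ← sum_sub_distrib]
  exact sum_congr rfl fun i _ => by ring

lemma Ddvals_finite : (Ddvals w).Finite := by
  have hsub : Ddvals w ⊆ Dd w '' Set.univ.pi fun _ => {0, 1} := by
    rintro v ⟨y, hy, rfl⟩
    exact ⟨y, fun i _ => by rcases hy i with h | h <;> simp [h], rfl⟩
  exact ((Set.Finite.pi fun _ => (Set.finite_singleton (1 : ℝ)).insert 0).image _).subset hsub

lemma isGreatest_sSup_Ddvals : IsGreatest (Ddvals w) (sSup (Ddvals w)) :=
  have hne : (Ddvals w).Nonempty := ⟨_, 0, fun _ => Or.inl rfl, rfl⟩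
  ⟨hne.csSup_mem (Ddvals_finite w), fun _ hv => le_csSup (Ddvals_finite w).bddAbove hv⟩

variable {w} (hw : 0 < ∑ i, w i)
include hw

lemma Dd_le_iff {x : Fin N → ℝ} (hx : ∀ i, 0 ≤ x i) (c : ℝ) :
    Dd w x ≤ c ↔ ∑ i, x i * (2 * w i - c) ≤ c * ∑ i, w i := by
  have hden : 0 < ∑ i, x i + ∑ i, w i := add_pos_of_nonneg_of_pos (sum_nonneg fun i _ => hx i) hw
  rw [Dd, div_le_iff₀ hden, sum_mul_two_mul_sub]
  constructor <;> intro h <;> linarith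

lemma Dd_eq_iff {x : Fin N → ℝ} (hx : ∀ i, 0 ≤ x i) (c : ℝ) :
    Dd w x = c ↔ ∑ i, x i * (2 * w i - c) = c * ∑ i, w i := by
  have hden : 0 < ∑ i, x i + ∑ i, w i := add_pos_of_nonneg_of_pos (sum_nonneg fun i _ => hx i) hw
  rw [Dd, div_eq_iff hden.ne', sum_mul_two_mul_sub]
  constructor <;> intro h <;> linarith

lemma sum_max_eq_of_isGreatest {t : ℝ} (ht : IsGreatest (Ddvals w) t) :
    ∑ i, max (2 * w i - t) 0 = t * ∑ i, w i := by
  obtain ⟨⟨y₀, hy₀, hty₀⟩, hub⟩ := ht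
  apply le_antisymm
  · let y : Fin N → ℝ := fun i => if t < 2 * w i then 1 else 0
    have hy : ∀ i, y i = 0 ∨ y i = 1 := fun i => by unfold y; split_ifs <;> simp
    have hy_nonneg : ∀ i, 0 ≤ y i := fun i => by rcases hy i with h | h <;> simp [h]
    calc ∑ i, max (2 * w i - t) 0 = ∑ i, y i * (2 * w i - t) := by
          refine sum_congr rfl fun i _ => ?_
          unfold y
          split_ifs with h
          · rw [one_mul, max_eq_left (by linarith)]
          · rw [zero_mul, max_eq_right (by linarith)]
      _ ≤ t * ∑ i, w i := (Dd_le_iff hw hy_nonneg t).mp (hub ⟨y, hy, rfl⟩)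
  · have hy₀_mem : ∀ i, y₀ i ∈ Set.Icc (0 : ℝ) 1 := fun i => by
      rcases hy₀ i with h | h <;> simp [h]
    calc t * ∑ i, w i = ∑ i, y₀ i * (2 * w i - t) :=
          ((Dd_eq_iff hw (fun i => (hy₀_mem i).1) t).mp hty₀.symm).symm
      _ ≤ ∑ i, max (2 * w i - t) 0 := sum_le_sum fun i _ => mul_le_max_zero (hy₀_mem i) _

variable {t : ℝ} (ht : IsGreatest (Ddvals w) t) {x : Fin N → ℝ}
  (hx : ∀ i, x i ∈ Set.Icc (0 : ℝ) 1)
include ht hx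

lemma Dd_le_of_isGreatest : Dd w x ≤ t := by
  rw [Dd_le_iff hw (fun i => (hx i).1), ← sum_max_eq_of_isGreatest hw ht]
  exact sum_le_sum fun i _ => mul_le_max_zero (hx i) _

lemma Dd_eq_iff_of_isGreatest :
    Dd w x = t ↔ ∀ i, (w i < t / 2 → x i = 0) ∧ (t / 2 < w i → x i = 1) := by
  rw [Dd_eq_iff hw (fun i => (hx i).1), ← sum_max_eq_of_isGreatest hw ht,
    sum_eq_sum_iff_of_le fun i _ => mul_le_max_zero (hx i) _]
  simp only [mem_univ, true_imp_iff]
  refine forall_congr' fun i => ?_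
  rw [mul_eq_max_zero_iff]
  apply and_congr <;> apply imp_congr_left <;> constructor <;> intro h <;> linarith

omit hx in
lemma sInf_SDdvals_eq_of_isGreatest : sInf (SDdvals w) = 1 - t := by
  refine IsLeast.csInf_eq ⟨?_, ?_⟩
  · obtain ⟨⟨y, hy, hty⟩, -⟩ := ht
    refine ⟨y, fun i => ?_, by rw [SDd_eq_one_sub_Dd, hty]⟩
    rcases hy i with h | h <;> simp [h]
  · rintro v ⟨x, hx, rfl⟩
    rw [SDd_eq_one_sub_Dd]
    linarith [Dd_le_of_isGreatest hw ht hx]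

end Dice

theorem discrete_soft_dice_minimizer_characterization_general
    {N : ℕ} (w : Fin N → ℝ)
    (hpos : 0 < ∑ i, w i)
    (Dstar : ℝ) (hD : Dstar = sSup (Ddvals w)) :
    (∀ x : Fin N → ℝ, (∀ i, x i ∈ Set.Icc (0:ℝ) 1) →
      (SDd w x = sInf (SDdvals w) ↔
        ∀ i, (w i < Dstar / 2 → x i = 0) ∧ (Dstar / 2 < w i → x i = 1))) ∧
    sInf (SDdvals w) = 1 - Dstar := by
  have ht : IsGreatest (Ddvals w) Dstar := hD ▸ isGreatest_sSup_Ddvals w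
  refine ⟨fun x hx => ?_, sInf_SDdvals_eq_of_isGreatest hpos ht⟩
  rw [sInf_SDdvals_eq_of_isGreatest hpos ht, SDd_eq_one_sub_Dd, sub_right_inj,
    Dd_eq_iff_of_isGreatest hpos ht hx]

theorem discrete_soft_dice_minimizer_characterization
    {N : ℕ} (hN : 1 ≤ N) (w : Fin N → ℝ)
    (hw : ∀ i, w i ∈ Set.Icc (0:ℝ) 1) (hpos : 0 < ∑ i, w i)
    (Dstar : ℝ) (hD : Dstar = sSup (Ddvals w)) :
    (∀ x : Fin N → ℝ, (∀ i, x i ∈ Set.Icc (0:ℝ) 1) →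
      (SDd w x = sInf (SDdvals w) ↔
        ∀ i, (w i < Dstar / 2 → x i = 0) ∧ (Dstar / 2 < w i → x i = 1))) ∧
    sInf (SDdvals w) = 1 - Dstar :=
  discrete_soft_dice_minimizer_characterization_general w hpos Dstar hD
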